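/- Let a > 0 and let f : (0,∞) → [0,∞) be measurable, with Laplace transform F(s) = ∫₀^∞ f(t) e^{-s t} dt (valued in [0,∞]). Then, as an identity in [0,∞], ∫₀^∞ f(t) · erfc(a√t) dt = (2/π) ∫₀^{π/2} F(a² sec²θ) dθ. -/

import Mathlib

open Real MeasureTheory Set

/-- Lower incomplete gamma function `γ(s,x) = ∫₀ˣ u^(s-1) e^(-u) du`. -/
noncomputable def lowerGamma (s x : ℝ) : ℝ := ∫ u in (0:ℝ)..x, u ^ (s - 1) * Real.exp (-u)

/-- Error function `erf x = (2/√π) ∫₀ˣ e^(-u²) du`. -/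
noncomputable def erf (x : ℝ) : ℝ := (2 / Real.sqrt π) * ∫ u in (0:ℝ)..x, Real.exp (-u ^ 2)

/-- Complementary error function. -/
noncomputable def erfc (x : ℝ) : ℝ := 1 - erf x

open Filter Topology

/-!
For `b ≥ 0`, writing `exp (-b² sec² θ) = ∫_b^∞ 2x sec² θ exp (-x² sec² θ) dx` and exchanging the
integrals, the inner `θ`-integral becomes the Gaussian integral `√π exp (-x²)` after the
substitution `u = tan θ`; integrating over `x > b` gives Craig's formula
`∫₀^{π/2} exp (-b² sec² θ) dθ = (π/2) erfc b`. The theorem is Craig's formula at `b = a √t`,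
integrated against `f t` and followed by one more exchange of integrals. Everything is done in
`[0, ∞]`, where Tonelli needs no integrability.
-/

lemma cos_pos_of_mem_Ioo_zero_pi_div_two {θ : ℝ} (hθ : θ ∈ Ioo 0 (π / 2)) : 0 < cos θ :=
  cos_pos_of_mem_Ioo ⟨by linarith [hθ.1, pi_pos], hθ.2⟩

lemma integrable_exp_neg_sq : Integrable fun x : ℝ => exp (-x ^ 2) := by
  simpa using integrable_exp_neg_mul_sq one_pos

lemma erfc_eq_integral_Ioi (b : ℝ) : erfc b = 2 / √π * ∫ x in Ioi b, exp (-x ^ 2) := by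
  have hgauss : ∫ x in Ioi (0 : ℝ), exp (-x ^ 2) = √π / 2 := by
    simpa using integral_gaussian_Ioi 1
  rw [← intervalIntegral.integral_interval_add_Ioi integrable_exp_neg_sq.integrableOn
    integrable_exp_neg_sq.integrableOn (a := 0) (b := b)] at hgauss
  have : √π ≠ 0 := by positivity
  rw [eq_div_iff two_ne_zero] at hgauss
  rw [erfc, erf]
  field_simp
  linarith

lemma erfc_nonneg (b : ℝ) : 0 ≤ erfc b := by
  rw [erfc_eq_integral_Ioi]
  exact mul_nonneg (by positivity) (setIntegral_nonneg measurableSet_Ioi fun _ _ => (exp_pos _).le)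

lemma lintegral_Ioi_two_mul_exp_neg_sq_mul {b c : ℝ} (hb : 0 ≤ b) (hc : 0 < c) :
    ∫⁻ x in Ioi b, ENNReal.ofReal (2 * x * c * exp (-(x ^ 2 * c)))
      = ENNReal.ofReal (exp (-(b ^ 2 * c))) := by
  have hderiv : ∀ x ∈ Ici b, HasDerivAt (fun x => -exp (-(x ^ 2 * c)))
      (2 * x * c * exp (-(x ^ 2 * c))) x := fun x _ =>
    (((hasDerivAt_pow 2 x).mul_const c).neg.exp.neg).congr_deriv
      (by simp only [Pi.neg_apply]; ring)
  have hpos : ∀ x ∈ Ioi b, 0 ≤ 2 * x * c * exp (-(x ^ 2 * c)) := fun x hx => by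
    have : 0 < x := hb.trans_lt hx
    positivity
  have hlim : Tendsto (fun x : ℝ => -exp (-(x ^ 2 * c))) atTop (𝓝 (-0)) :=
    (tendsto_exp_atBot.comp (tendsto_neg_atTop_atBot.comp
      ((tendsto_pow_atTop two_ne_zero).atTop_mul_const hc))).neg
  rw [← ofReal_integral_eq_lintegral_ofReal (integrableOn_Ioi_deriv_of_nonneg' hderiv hpos hlim)
    ((ae_restrict_iff' measurableSet_Ioi).2 (Eventually.of_forall hpos)),
    integral_Ioi_of_hasDerivAt_of_nonneg' hderiv hpos hlim]
  simp

lemma image_tan_Ioo_zero_pi_div_two : tan '' Ioo 0 (π / 2) = Ioi 0 := by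
  ext u
  constructor
  · rintro ⟨θ, ⟨h0, hθ⟩, rfl⟩
    exact tan_pos_of_pos_of_lt_pi_div_two h0 hθ
  · intro hu
    refine ⟨arctan u, ⟨?_, arctan_lt_pi_div_two u⟩, tan_arctan u⟩
    simpa using arctan_strictMono hu

lemma lintegral_Ioo_tan_eq_lintegral_Ioi (g : ℝ → ENNReal) :
    ∫⁻ θ in Ioo 0 (π / 2), ENNReal.ofReal (1 / cos θ ^ 2) * g (tan θ) = ∫⁻ u in Ioi 0, g u := by
  have hsub : Ioo 0 (π / 2) ⊆ Ioo (-(π / 2)) (π / 2) :=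
    Ioo_subset_Ioo_left (by linarith [pi_pos])
  have hderiv : ∀ θ ∈ Ioo 0 (π / 2), HasDerivWithinAt tan (1 / cos θ ^ 2) (Ioo 0 (π / 2)) θ :=
    fun θ hθ => (hasDerivAt_tan (cos_pos_of_mem_Ioo_zero_pi_div_two hθ).ne').hasDerivWithinAt
  rw [← image_tan_Ioo_zero_pi_div_two, lintegral_image_eq_lintegral_abs_deriv_mul measurableSet_Ioo
    hderiv (strictMonoOn_tan.mono hsub).injOn]
  refine lintegral_congr fun θ => ?_
  rw [abs_of_nonneg (by positivity)]

lemma lintegral_Ioo_two_mul_exp_neg_sq_div_cos_sq {x : ℝ} (hx : 0 < x) :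
    ∫⁻ θ in Ioo 0 (π / 2),
        ENNReal.ofReal (2 * x * (1 / cos θ ^ 2) * exp (-(x ^ 2 * (1 / cos θ ^ 2))))
      = ENNReal.ofReal (√π * exp (-x ^ 2)) := by
  have hsec : ∀ θ ∈ Ioo 0 (π / 2), ENNReal.ofReal (2 * x * (1 / cos θ ^ 2) *
      exp (-(x ^ 2 * (1 / cos θ ^ 2)))) = ENNReal.ofReal (1 / cos θ ^ 2) *
      ENNReal.ofReal (2 * x * exp (-x ^ 2) * exp (-x ^ 2 * tan θ ^ 2)) := fun θ hθ => by
    have hcos : cos θ ≠ 0 := (cos_pos_of_mem_Ioo_zero_pi_div_two hθ).ne'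
    rw [← ENNReal.ofReal_mul (by positivity), one_div, ← inv_one_add_tan_sq hcos, inv_inv,
      show -(x ^ 2 * (1 + tan θ ^ 2)) = -x ^ 2 + -x ^ 2 * tan θ ^ 2 by ring, exp_add]
    ring_nf
  have hgauss : Integrable fun u : ℝ => 2 * x * exp (-x ^ 2) * exp (-x ^ 2 * u ^ 2) :=
    (integrable_exp_neg_mul_sq (by positivity)).const_mul _
  rw [setLIntegral_congr_fun measurableSet_Ioo hsec, lintegral_Ioo_tan_eq_lintegral_Ioi
    fun u => ENNReal.ofReal (2 * x * exp (-x ^ 2) * exp (-x ^ 2 * u ^ 2)),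
    ← ofReal_integral_eq_lintegral_ofReal hgauss.integrableOn
      (Eventually.of_forall fun _ => by positivity), integral_const_mul, integral_gaussian_Ioi,
    sqrt_div' _ (sq_nonneg x), sqrt_sq hx.le]
  congr 1
  field_simp

theorem lintegral_exp_neg_sq_div_cos_sq {b : ℝ} (hb : 0 ≤ b) :
    ∫⁻ θ in Ioo 0 (π / 2), ENNReal.ofReal (exp (-(b ^ 2 / cos θ ^ 2)))
      = ENNReal.ofReal (π / 2 * erfc b) := by
  have hcos : ∀ θ ∈ Ioo 0 (π / 2), 0 < 1 / cos θ ^ 2 := fun θ hθ => by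
    have := cos_pos_of_mem_Ioo_zero_pi_div_two hθ
    positivity
  calc ∫⁻ θ in Ioo 0 (π / 2), ENNReal.ofReal (exp (-(b ^ 2 / cos θ ^ 2)))
      = ∫⁻ θ in Ioo 0 (π / 2), ∫⁻ x in Ioi b,
          ENNReal.ofReal (2 * x * (1 / cos θ ^ 2) * exp (-(x ^ 2 * (1 / cos θ ^ 2)))) := by
        refine setLIntegral_congr_fun measurableSet_Ioo fun θ hθ => ?_
        rw [lintegral_Ioi_two_mul_exp_neg_sq_mul hb (hcos θ hθ), mul_one_div]
    _ = ∫⁻ x in Ioi b, ∫⁻ θ in Ioo 0 (π / 2),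
          ENNReal.ofReal (2 * x * (1 / cos θ ^ 2) * exp (-(x ^ 2 * (1 / cos θ ^ 2)))) :=
        lintegral_lintegral_swap (Measurable.aemeasurable (by fun_prop))
    _ = ∫⁻ x in Ioi b, ENNReal.ofReal (√π * exp (-x ^ 2)) :=
        setLIntegral_congr_fun measurableSet_Ioi fun x hx =>
          lintegral_Ioo_two_mul_exp_neg_sq_div_cos_sq (hb.trans_lt hx)
    _ = ENNReal.ofReal (π / 2 * erfc b) := by
        rw [← ofReal_integral_eq_lintegral_ofReal (integrable_exp_neg_sq.const_mul _).integrableOn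
          (Eventually.of_forall fun _ => by positivity), integral_const_mul, erfc_eq_integral_Ioi]
        congr 1
        field_simp
        rw [sq_sqrt pi_pos.le, mul_comm]

theorem stmt_10_general (a : ℝ) (ha : 0 < a) (f : ℝ → ℝ) (hf : Measurable f)
    (F : ℝ → ENNReal)
    (hF : ∀ s : ℝ, F s = ∫⁻ t in Ioi (0:ℝ), ENNReal.ofReal (f t * Real.exp (-s * t))) :
    (∫⁻ t in Ioi (0:ℝ), ENNReal.ofReal (f t * erfc (a * Real.sqrt t)))
      = ENNReal.ofReal (2 / π) * ∫⁻ θ in Ioo (0:ℝ) (π / 2), F (a ^ 2 / Real.cos θ ^ 2) := by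
  have herfc : ∀ t ∈ Ioi (0 : ℝ), ENNReal.ofReal (f t * erfc (a * √t)) =
      ENNReal.ofReal (2 / π) * ∫⁻ θ in Ioo 0 (π / 2),
        ENNReal.ofReal (f t) * ENNReal.ofReal (exp (-(a ^ 2 / cos θ ^ 2) * t)) := by
    intro t ht
    have hsq : ∀ θ, -((a * √t) ^ 2 / cos θ ^ 2) = -(a ^ 2 / cos θ ^ 2) * t := fun θ => by
      rw [mul_pow, sq_sqrt ht.le]
      ring
    simp_rw [lintegral_const_mul' _ _ ENNReal.ofReal_ne_top, ← hsq]
    rw [lintegral_exp_neg_sq_div_cos_sq (by positivity), mul_left_comm,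
      ← ENNReal.ofReal_mul (by positivity), ENNReal.ofReal_mul' (erfc_nonneg _)]
    congr 2
    field_simp
  calc ∫⁻ t in Ioi 0, ENNReal.ofReal (f t * erfc (a * √t))
      = ∫⁻ t in Ioi 0, ENNReal.ofReal (2 / π) * ∫⁻ θ in Ioo 0 (π / 2),
          ENNReal.ofReal (f t) * ENNReal.ofReal (exp (-(a ^ 2 / cos θ ^ 2) * t)) :=
        setLIntegral_congr_fun measurableSet_Ioi herfc
    _ = ENNReal.ofReal (2 / π) * ∫⁻ θ in Ioo 0 (π / 2), ∫⁻ t in Ioi 0,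
          ENNReal.ofReal (f t) * ENNReal.ofReal (exp (-(a ^ 2 / cos θ ^ 2) * t)) := by
        rw [lintegral_const_mul' _ _ ENNReal.ofReal_ne_top,
          lintegral_lintegral_swap (Measurable.aemeasurable (by fun_prop))]
    _ = ENNReal.ofReal (2 / π) * ∫⁻ θ in Ioo 0 (π / 2), F (a ^ 2 / cos θ ^ 2) := by
        simp_rw [hF, ENNReal.ofReal_mul' (exp_pos _).le]

theorem stmt_10 (a : ℝ) (ha : 0 < a) (f : ℝ → ℝ) (hf : Measurable f)
    (hf0 : ∀ t, 0 ≤ f t) (F : ℝ → ENNReal)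
    (hF : ∀ s : ℝ, F s = ∫⁻ t in Ioi (0:ℝ), ENNReal.ofReal (f t * Real.exp (-s * t))) :
    (∫⁻ t in Ioi (0:ℝ), ENNReal.ofReal (f t * erfc (a * Real.sqrt t)))
      = ENNReal.ofReal (2 / π) * ∫⁻ θ in Ioo (0:ℝ) (π / 2), F (a ^ 2 / Real.cos θ ^ 2) :=
  stmt_10_general a ha f hf F hF
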